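/- arXiv:2301.02104 — 6 statements merged into one kernel-verified Lean document; each statement's English description precedes it below -/
import Mathlib

section
/- The number of edges of the multigraph G_K equals 2·3^K. That is, |E_K| = 2·3^K for every positive integer K. -/
open MeasureTheory ProbabilityTheory Finset

noncomputable section

/-- The sample space of the coupled construction: `ε`, `(α_k)`, `(β_k)`. -/
abbrev Omega (K : ℕ) := Bool × (Fin K → Fin 3) × (Fin K → Bool)

/-- The uniform probability measure on `Omega K`; its coordinates are independent,
`ε` is uniform on `{-1,1}` (via `Bool`), each `α_k` is Bernoulli(1/3)
(`α_k = 1` iff the `Fin 3` coordinate equals `0`), each `β_k` uniform on `{-1,1}`. -/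
def unif (K : ℕ) : Measure (Omega K) := (PMF.uniformOfFintype (Omega K)).toMeasure

def sgn (b : Bool) : ℤ := if b then 1 else -1

def epsRV {K : ℕ} (ω : Omega K) : ℤ := sgn ω.1

def alphaRV {K : ℕ} (k : Fin K) (ω : Omega K) : ℤ := if ω.2.1 k = 0 then 1 else 0

def alphaN {K : ℕ} (k : Fin K) (ω : Omega K) : ℕ := if ω.2.1 k = 0 then 1 else 0

def betaRV {K : ℕ} (k : Fin K) (ω : Omega K) : ℤ := sgn (ω.2.2 k)

/-- `γ_{j+1} = ε · (-1)^{α_1 + ⋯ + α_j}` (0-indexed: `gammaRV j` is the paper's `γ_{j+1}`). -/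
def gammaRV {K : ℕ} (j : ℕ) (ω : Omega K) : ℤ :=
  epsRV ω * (-1) ^ (∑ k ∈ Finset.univ.filter (fun k : Fin K => (k : ℕ) < j), alphaN k ω)

/-- `A_k = (1-α_k)β_k + α_k γ_k`. -/
def ARV {K : ℕ} (k : Fin K) (ω : Omega K) : ℤ :=
  (1 - alphaRV k ω) * betaRV k ω + alphaRV k ω * gammaRV (k : ℕ) ω

/-- `B_k = (1-α_k)β_k - α_k γ_k`. -/
def BRV {K : ℕ} (k : Fin K) (ω : Omega K) : ℤ :=
  (1 - alphaRV k ω) * betaRV k ω - alphaRV k ω * gammaRV (k : ℕ) ω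

/-- The nonzero coordinates of `v - u` have alternating signs: whenever `i < j` are
two "changed" coordinates with no changed coordinate strictly between them,
the changes have opposite signs. -/
def AltSigns {K : ℕ} (u v : Fin K → ℤ) : Prop :=
  ∀ i j : Fin K, i < j → u i ≠ v i → u j ≠ v j →
    (∀ l : Fin K, i < l → l < j → u l = v l) → v i - u i = -(v j - u j)

/-- The first nonzero coordinate of `v - u` is negative if `s = true` (positive edges `E⁺`),
positive if `s = false` (negative edges `E⁻`). -/
def FirstSign {K : ℕ} (s : Bool) (u v : Fin K → ℤ) : Prop :=
  ∀ i : Fin K, u i ≠ v i → (∀ l : Fin K, l < i → u l = v l) →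
    (if s then v i - u i < 0 else 0 < v i - u i)

/-- `(u,v)` is an edge of sign `s` of the multigraph `G_K`: either a loop (each vertex
carries one loop of each sign), or `u ≠ v` with alternating signs starting as dictated by `s`. -/
def IsEdge {K : ℕ} (s : Bool) (u v : Fin K → ℤ) : Prop :=
  u = v ∨ (u ≠ v ∧ AltSigns u v ∧ FirstSign s u v)

/-- Interpret a Boolean vector as a vertex of `V_K = {-1,1}^K`. -/
def toPM {K : ℕ} (b : Fin K → Bool) : Fin K → ℤ := fun k => if b k then 1 else -1

section Aux

lemma parity_decide (m : ℕ) : decide ((m + 1) % 2 = 0) = !decide (m % 2 = 0) := by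
  by_cases hp : m % 2 = 0 <;> simp [hp] <;> omega

/-- number of "marked" coordinates strictly below `k` -/
def cnt0 {K : ℕ} (P : Fin K → Prop) [DecidablePred P] (k : Fin K) : ℕ :=
  (Finset.univ.filter (fun l => l < k ∧ P l)).card

lemma cnt0_congr {K : ℕ} {P Q : Fin K → Prop} [DecidablePred P] [DecidablePred Q]
    (h : ∀ l, P l ↔ Q l) (k : Fin K) : cnt0 P k = cnt0 Q k := by
  unfold cnt0
  congr 1
  apply Finset.filter_congr
  intro l _
  simp [h l]

lemma cnt0_succ {K : ℕ} (P : Fin K → Prop) [DecidablePred P] {i j : Fin K}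
    (hij : i < j) (hPi : P i) (hmid : ∀ l, i < l → l < j → ¬ P l) :
    cnt0 P j = cnt0 P i + 1 := by
  unfold cnt0
  have h1 : Finset.univ.filter (fun l => l < j ∧ P l)
      = insert i (Finset.univ.filter (fun l => l < i ∧ P l)) := by
    ext l
    simp only [Finset.mem_filter, Finset.mem_univ, true_and, Finset.mem_insert]
    constructor
    · rintro ⟨hlj, hPl⟩
      rcases lt_trichotomy l i with h | h | h
      · exact Or.inr ⟨h, hPl⟩
      · exact Or.inl h
      · exact absurd hPl (hmid l h hlj)
    · rintro (rfl | ⟨hli, hPl⟩)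
      · exact ⟨hij, hPi⟩
      · exact ⟨hli.trans hij, hPl⟩
  rw [h1, Finset.card_insert_of_notMem]
  simp

lemma cnt0_zero {K : ℕ} (P : Fin K → Prop) [DecidablePred P] {k : Fin K}
    (h : ∀ l, l < k → ¬ P l) : cnt0 P k = 0 := by
  unfold cnt0
  rw [Finset.card_eq_zero, Finset.filter_eq_empty_iff]
  rintro l _ ⟨h1, h2⟩
  exact h l h1 h2

lemma toPM_ne_iff {K : ℕ} {a b : Fin K → Bool} {k : Fin K} :
    toPM a k ≠ toPM b k ↔ a k ≠ b k := by
  cases h1 : a k <;> cases h2 : b k <;> simp [toPM, h1, h2]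

lemma sub_toPM {K : ℕ} {a b : Fin K → Bool} {k : Fin K} (h : a k ≠ b k) :
    toPM b k - toPM a k = if b k then 2 else -2 := by
  revert h
  cases h1 : a k <;> cases h2 : b k <;> simp [toPM, h1, h2] <;> norm_num

lemma bool_ne_iff {x y : Bool} (h : x ≠ y) : x = !y := by
  revert h; cases x <;> cases y <;> simp

lemma keyA {K : ℕ} {s : Bool} {a b : Fin K → Bool}
    (h : IsEdge s (toPM a) (toPM b)) :
    ∀ k : Fin K, a k ≠ b k →
      a k = (s == decide (cnt0 (fun l => a l ≠ b l) k % 2 = 0)) := by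
  rcases h with heq | ⟨hne, halt, hfs⟩
  · intro k hk
    exact absurd (congrFun heq k) (toPM_ne_iff.mpr hk)
  · have main : ∀ n : ℕ, ∀ k : Fin K, (k : ℕ) = n → a k ≠ b k →
        a k = (s == decide (cnt0 (fun l => a l ≠ b l) k % 2 = 0)) := by
      intro n
      induction n using Nat.strong_induction_on with
      | _ n ih =>
      intro k hkn hk
      by_cases hF : (Finset.univ.filter (fun l => l < k ∧ a l ≠ b l)).Nonempty
      · obtain ⟨j, hjmem, hjmax⟩ :
            ∃ j ∈ Finset.univ.filter (fun l => l < k ∧ a l ≠ b l),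
              ∀ l ∈ Finset.univ.filter (fun l => l < k ∧ a l ≠ b l), l ≤ j :=
          ⟨Finset.max' _ hF, Finset.max'_mem _ hF, fun l hl => Finset.le_max' _ l hl⟩
        rw [Finset.mem_filter] at hjmem
        obtain ⟨-, hjk, hjne⟩ := hjmem
        have hmid : ∀ l, j < l → l < k → ¬ (a l ≠ b l) := by
          intro l h1 h2 hc
          have hl : l ∈ Finset.univ.filter (fun l => l < k ∧ a l ≠ b l) := by
            simp only [Finset.mem_filter, Finset.mem_univ, true_and]
            exact ⟨h2, hc⟩
          exact absurd (hjmax l hl) (not_le.mpr h1)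
        have hcnt := cnt0_succ (fun l => a l ≠ b l) hjk hjne hmid
        have hIH := ih (j : ℕ) (hkn ▸ hjk) j rfl hjne
        have halt' := halt j k hjk (toPM_ne_iff.mpr hjne) (toPM_ne_iff.mpr hk)
          (fun l h1 h2 => by
            by_contra hc
            exact hmid l h1 h2 (toPM_ne_iff.mp hc))
        rw [sub_toPM hjne, sub_toPM hk] at halt'
        have hbj : b j = !b k := by
          revert halt'
          cases b j <;> cases b k <;> simp <;> omega
        have haj : a j = !b j := bool_ne_iff hjne
        have hak : a k = !b k := bool_ne_iff hk
        have hflip : a k = !a j := by rw [hak, haj, hbj, Bool.not_not]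
        rw [hcnt, parity_decide, hflip, hIH]
        generalize decide (cnt0 (fun l => a l ≠ b l) j % 2 = 0) = q
        cases s <;> cases q <;> rfl
      · have hc0 : cnt0 (fun l => a l ≠ b l) k = 0 := by
          apply cnt0_zero
          intro l h1 h2
          exact hF ⟨l, by
            simp only [Finset.mem_filter, Finset.mem_univ, true_and]
            exact ⟨h1, h2⟩⟩
        have hbelow : ∀ l, l < k → toPM a l = toPM b l := by
          intro l h1
          by_contra hc
          exact hF ⟨l, by
            simp only [Finset.mem_filter, Finset.mem_univ, true_and]
            exact ⟨h1, toPM_ne_iff.mp hc⟩⟩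
        have hfs' := hfs k (toPM_ne_iff.mpr hk) hbelow
        rw [sub_toPM hk] at hfs'
        have hak : a k = !b k := bool_ne_iff hk
        rw [hc0, hak]
        revert hfs'
        cases s <;> cases b k <;> simp <;> norm_num
    exact fun k => main (k : ℕ) k rfl
end Aux

section Dec

def decA {K : ℕ} (s : Bool) (g : Fin K → Fin 3) (k : Fin K) : Bool :=
  if g k = 0 then s == decide (cnt0 (fun l => g l = 0) k % 2 = 0) else decide (g k = 1)

def decB {K : ℕ} (s : Bool) (g : Fin K → Fin 3) (k : Fin K) : Bool :=
  if g k = 0 then !(s == decide (cnt0 (fun l => g l = 0) k % 2 = 0)) else decide (g k = 1)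

lemma dec_ne_iff {K : ℕ} {s : Bool} {g : Fin K → Fin 3} {k : Fin K} :
    decA s g k ≠ decB s g k ↔ g k = 0 := by
  by_cases h : g k = 0 <;> simp [decA, decB, h]

lemma isEdge_dec {K : ℕ} (s : Bool) (g : Fin K → Fin 3) :
    IsEdge s (toPM (decA s g)) (toPM (decB s g)) := by
  by_cases hz : ∃ k, g k = 0
  · right
    refine ⟨?_, ?_, ?_⟩
    · obtain ⟨k, hk⟩ := hz
      intro hcon
      exact (toPM_ne_iff.mpr (dec_ne_iff.mpr hk)) (congrFun hcon k)
    · intro i j hij hi hj hmidpm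
      have hgi : g i = 0 := dec_ne_iff.mp (toPM_ne_iff.mp hi)
      have hgj : g j = 0 := dec_ne_iff.mp (toPM_ne_iff.mp hj)
      have hmid : ∀ l, i < l → l < j → ¬ (g l = 0) := by
        intro l h1 h2 hc
        exact (toPM_ne_iff.mpr (dec_ne_iff.mpr hc)) (hmidpm l h1 h2)
      have hcnt := cnt0_succ (fun l => g l = 0) hij hgi hmid
      rw [sub_toPM (dec_ne_iff.mpr hgi), sub_toPM (dec_ne_iff.mpr hgj)]
      have hbi : decB s g i = !(s == decide (cnt0 (fun l => g l = 0) i % 2 = 0)) := by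
        simp [decB, hgi]
      have hbj : decB s g j = !(s == decide (cnt0 (fun l => g l = 0) j % 2 = 0)) := by
        simp [decB, hgj]
      rw [hbi, hbj, hcnt, parity_decide]
      generalize decide (cnt0 (fun l => g l = 0) i % 2 = 0) = q
      cases s <;> cases q <;> norm_num
    · intro i hi hbelow
      have hgi : g i = 0 := dec_ne_iff.mp (toPM_ne_iff.mp hi)
      have hc0 : cnt0 (fun l => g l = 0) i = 0 := by
        apply cnt0_zero
        intro l h1 h2
        exact (toPM_ne_iff.mpr (dec_ne_iff.mpr h2)) (hbelow l h1)
      rw [sub_toPM (dec_ne_iff.mpr hgi)]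
      have hbi : decB s g i = !s := by simp [decB, hgi, hc0]
      rw [hbi]
      cases s <;> norm_num
  · left
    push_neg at hz
    funext k
    simp [toPM, decA, decB, hz k]

def enc {K : ℕ} (a b : Fin K → Bool) (k : Fin K) : Fin 3 :=
  if a k = b k then (if a k then 1 else 2) else 0

lemma fin3_cases (x : Fin 3) : x = 0 ∨ x = 1 ∨ x = 2 := by fin_cases x <;> simp

lemma enc_eq_zero_iff {K : ℕ} {a b : Fin K → Bool} {k : Fin K} :
    enc a b k = 0 ↔ a k ≠ b k := by
  unfold enc
  cases h1 : a k <;> cases h2 : b k <;> simp [h1, h2] <;> decide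

def edgeEquiv (K : ℕ) : (Bool × (Fin K → Fin 3)) ≃
    {e : Bool × (Fin K → Bool) × (Fin K → Bool) // IsEdge e.1 (toPM e.2.1) (toPM e.2.2)} where
  toFun p := ⟨(p.1, decA p.1 p.2, decB p.1 p.2), isEdge_dec p.1 p.2⟩
  invFun e := (e.1.1, enc e.1.2.1 e.1.2.2)
  left_inv := by
    rintro ⟨s, g⟩
    refine Prod.ext rfl ?_
    show enc (decA s g) (decB s g) = g
    funext k
    by_cases h : g k = 0
    · rw [show enc (decA s g) (decB s g) k = 0 from enc_eq_zero_iff.mpr (dec_ne_iff.mpr h), h]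
    · rcases fin3_cases (g k) with h0 | h1 | h2
      · exact absurd h0 h
      · simp [enc, decA, decB, h, h1]
      · simp [enc, decA, decB, h, h2]
  right_inv := by
    rintro ⟨⟨s, a, b⟩, he⟩
    refine Subtype.ext ?_
    show (s, decA s (enc a b), decB s (enc a b)) = (s, a, b)
    have hcnt : ∀ k, cnt0 (fun l => enc a b l = 0) k = cnt0 (fun l => a l ≠ b l) k :=
      cnt0_congr (fun l => enc_eq_zero_iff)
    refine Prod.ext rfl (Prod.ext ?_ ?_)
    · show decA s (enc a b) = a
      funext k
      by_cases hk : a k = b k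
      · have hne : ¬ (enc a b k = 0) := by rw [enc_eq_zero_iff]; simp [hk]
        have he1 : enc a b k = if a k then 1 else 2 := by simp [enc, hk]
        rw [show decA s (enc a b) k = decide (enc a b k = 1) from by simp [decA, hne], he1]
        cases hak : a k <;> simp [hak] <;> decide
      · have h0 : enc a b k = 0 := enc_eq_zero_iff.mpr hk
        rw [show decA s (enc a b) k = (s == decide (cnt0 (fun l => enc a b l = 0) k % 2 = 0))
          from by simp [decA, h0], hcnt k]
        exact (keyA he k hk).symm
    · show decB s (enc a b) = b
      funext k
      by_cases hk : a k = b k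
      · have hne : ¬ (enc a b k = 0) := by rw [enc_eq_zero_iff]; simp [hk]
        have he1 : enc a b k = if a k then 1 else 2 := by simp [enc, hk]
        rw [show decB s (enc a b) k = decide (enc a b k = 1) from by simp [decB, hne], he1, ← hk]
        cases hak : a k <;> simp [hak] <;> decide
      · have h0 : enc a b k = 0 := enc_eq_zero_iff.mpr hk
        have hb : b k = !a k := bool_ne_iff (Ne.symm hk)
        rw [show decB s (enc a b) k = !(s == decide (cnt0 (fun l => enc a b l = 0) k % 2 = 0))
          from by simp [decB, h0], hcnt k, ← keyA he k hk, hb]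

end Dec

/-- The number of edges of the multigraph `G_K` equals `2·3^K`: counting edges as
triples (sign, endpoints), where loops appear once with each sign. -/
theorem stmt0 (K : ℕ) (hK : 0 < K) :
    Nat.card {e : Bool × (Fin K → Bool) × (Fin K → Bool) //
      IsEdge e.1 (toPM e.2.1) (toPM e.2.2)} = 2 * 3 ^ K := by
  rw [← Nat.card_congr (edgeEquiv K)]
  simp [Nat.card_eq_fintype_card]
end
end

section
/- For each vertex a ∈ V_K = {-1,1}^K with blocks of constancy of lengths M_1, ..., M_N (so M_1 + ... + M_N = K), the number of neighbors b ≠ a of a in G_K equals the number of sequences (ε_1,...,ε_N) ∈ {0,1}^N with no two indices m < m' satisfying ε_m = ε_{m'} = 1, m' - m even, and ε_j = 0 for all m < j < m', weighted by ∏_{m: ε_m=1} M_m, summed over all such nonzero sequences. -/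
open MeasureTheory ProbabilityTheory Finset

noncomputable section

/-- Partial sums `S_m = M_1 + ⋯ + M_m` of the block lengths. -/
def Ssum (M : ℕ → ℕ) (m : ℕ) : ℕ := ∑ k ∈ Finset.range m, M k

/-- 0-indexed block index of position `k` (positions `Ssum M j ≤ k < Ssum M (j+1)`
belong to block `j`). -/
def blk (M : ℕ → ℕ) (N : ℕ) (k : ℕ) : ℕ :=
  ((Finset.range N).filter (fun m => Ssum M (m + 1) ≤ k)).card

/-- The vertex `a ∈ {-1,1}^K` whose maximal constancy blocks have lengths
`M_1, …, M_N` and whose first digit is `1` (so block `j` carries the value `(-1)^j`,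
0-indexed). -/
def avert (M : ℕ → ℕ) (N : ℕ) {K : ℕ} : Fin K → ℤ :=
  fun k => if blk M N (k : ℕ) % 2 = 0 then 1 else -1

/-- Finite continued fraction: `cf [a₁, …, aₙ] = 1/(a₁ + 1/(a₂ + ⋯ + 1/(aₙ + 1)))`,
with `cf [] = 1`. -/
noncomputable def cf : List ℝ → ℝ
  | [] => 1
  | a :: l => 1 / (a + cf l)

/-- `x_j^N = [M_j; M_{j+1}, …, M_{N-1}, 1]` (0-indexed blocks `j, …, N-1`);
for `j = N` this is the convention `x_{N+1}^N = 1`. -/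
noncomputable def xcf (M : ℕ → ℕ) (N j : ℕ) : ℝ :=
  cf ((List.range (N - j)).map fun i => (M (j + i) : ℝ))

/-- `ε_j = 1`: the step of the walk changes a digit in the `j`-th (0-indexed)
constancy block, i.e. `B` differs from `A` at some position of block `j`. -/
def epsChange {K : ℕ} (M : ℕ → ℕ) (N : ℕ) (j : ℕ) (ω : Omega K) : Prop :=
  ∃ k : Fin K, blk M N (k : ℕ) = j ∧ BRV k ω ≠ ARV k ω


/-!
Taking the XOR with `a` identifies a neighbour `b ≠ a` with its nonempty set of changed positions.
A changed digit moves by `-2 a_k`, and `a` is constant on blocks with alternating values, so two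
consecutive changes have opposite signs exactly when they lie in blocks of different parity. Such a
change set meets each block at most once (the first change after a change in block `m` would still
lie in block `m`), hence it amounts to the set `ε` of blocks it meets, which satisfies the odd-gap
condition, together with a choice of one of the `M_m` positions of each block `m ∈ ε`.
-/
section Alternation

variable {α β γ : Type*}

def Consecutive [LT α] (s : α → Bool) (i j : α) : Prop :=
  i < j ∧ s i = true ∧ s j = true ∧ ∀ l, i < l → l < j → s l = false

def Alternating [LT α] (c : α → γ) (s : α → Bool) : Prop :=
  ∀ i j, Consecutive s i j → c i ≠ c j

open scoped Classical in
def boolImage (g : α → β) (s : α → Bool) (m : β) : Bool :=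
  decide (∃ k, s k = true ∧ g k = m)

theorem boolImage_eq_true {g : α → β} {s : α → Bool} {m : β} :
    boolImage g s m = true ↔ ∃ k, s k = true ∧ g k = m := by
  simp [boolImage]

theorem boolImage_eq_false_iff {g : α → β} {s : α → Bool} :
    boolImage g s = (fun _ => false) ↔ s = fun _ => false := by
  simp only [funext_iff, Bool.eq_false_iff, ne_eq, boolImage_eq_true]
  grind

theorem exists_consecutive_le [LinearOrder α] [WellFoundedLT α] {s : α → Bool} {i j : α}
    (hij : i < j) (hi : s i = true) (hj : s j = true) : ∃ j' ≤ j, Consecutive s i j' := by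
  obtain ⟨l, ⟨hil, hl⟩, hmin⟩ :=
    wellFounded_lt.has_min {l | i < l ∧ s l = true} ⟨j, hij, hj⟩
  refine ⟨l, not_lt.1 fun h => hmin j ⟨hij, hj⟩ h, hil, hi, hl, fun x hix hxl => ?_⟩
  by_contra hx
  exact hmin x ⟨hix, Bool.not_eq_false _ ▸ hx⟩ hxl

theorem Alternating.injOn_of_monotone [LinearOrder α] [WellFoundedLT α] [PartialOrder β]
    {g : α → β} (hg : Monotone g) {c : β → γ} {s : α → Bool}
    (hs : Alternating (c ∘ g) s) :
    Set.InjOn g {k | s k = true} := by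
  suffices ∀ i j, i < j → s i = true → s j = true → g i ≠ g j by
    intro i hi j hj hgij
    by_contra hne
    rcases lt_or_gt_of_ne hne with h | h
    exacts [this i j h hi hj hgij, this j i h hj hi hgij.symm]
  intro i j hij hi hj hgij
  obtain ⟨j', hj'j, hcons⟩ := exists_consecutive_le hij hi hj
  have : g j' = g i := le_antisymm (hgij ▸ hg hj'j) (hg hcons.1.le)
  exact hs i j' hcons (by simp [this])

theorem consecutive_boolImage_iff [LinearOrder α] [PartialOrder β] {g : α → β}
    (hg : Monotone g) {s : α → Bool} (hinj : Set.InjOn g {k | s k = true}) {i j : α}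
    (hi : s i = true) (hj : s j = true) :
    Consecutive (boolImage g s) (g i) (g j) ↔ Consecutive s i j := by
  have hmono : StrictMonoOn g {k | s k = true} :=
    (hg.monotoneOn _).strictMonoOn_of_injOn hinj
  constructor
  · rintro ⟨hlt, -, -, hbetween⟩
    refine ⟨hmono.lt_iff_lt hi hj |>.1 hlt, hi, hj, fun l hil hlj => ?_⟩
    by_contra hl
    rw [Bool.not_eq_false] at hl
    have := hbetween (g l) (hmono hi hl hil) (hmono hl hj hlj)
    simp only [boolImage, decide_eq_false_iff_not, not_exists, not_and] at this
    exact this l hl rfl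
  · rintro ⟨hlt, -, -, hbetween⟩
    refine ⟨hmono hi hj hlt, boolImage_eq_true.2 ⟨i, hi, rfl⟩,
      boolImage_eq_true.2 ⟨j, hj, rfl⟩, fun m him hmj => ?_⟩
    by_contra hm
    obtain ⟨l, hl, rfl⟩ := boolImage_eq_true.1 (Bool.not_eq_false _ ▸ hm)
    have := hbetween l (hg.reflect_lt him) (hg.reflect_lt hmj)
    simp [hl] at this

theorem alternating_comp_iff [LinearOrder α] [PartialOrder β] {g : α → β} (hg : Monotone g)
    {c : β → γ} {s : α → Bool} (hinj : Set.InjOn g {k | s k = true}) :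
    Alternating (c ∘ g) s ↔ Alternating c (boolImage g s) := by
  constructor
  · intro hs m m' hcons
    obtain ⟨i, hi, rfl⟩ := boolImage_eq_true.1 hcons.2.1
    obtain ⟨j, hj, rfl⟩ := boolImage_eq_true.1 hcons.2.2.1
    exact hs i j ((consecutive_boolImage_iff hg hinj hi hj).1 hcons)
  · intro hs i j hcons
    exact hs (g i) (g j) ((consecutive_boolImage_iff hg hinj hcons.2.1 hcons.2.2.1).2 hcons)

end Alternation

section Counting

variable {α β γ : Type*}

open scoped Classical in
theorem card_injOn_boolImage_eq [Fintype α] [Fintype β] [DecidableEq β] (g : α → β)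
    (ε : β → Bool) :
    #{s : α → Bool | Set.InjOn g {k | s k = true} ∧ boolImage g s = ε} =
      ∏ m ∈ {m | ε m = true}, #{k | g k = m} := by
  let sOf (f : ∀ m : {m // ε m = true}, {k // g k = m}) (k : α) : Bool :=
    decide (∃ m, (f m : α) = k)
  have sOf_eq_true {f k} : sOf f k = true ↔ ∃ m, (f m : α) = k := decide_eq_true_iff
  have eq_of_g_eq {f f' : ∀ m : {m // ε m = true}, {k // g k = m}} {m m'}
      (h : g (f m) = g (f' m')) : m = m' :=
    Subtype.ext ((f m).2.symm.trans (h.trans (f' m').2))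
  calc #{s : α → Bool | Set.InjOn g {k | s k = true} ∧ boolImage g s = ε}
      = Fintype.card (∀ m : {m // ε m = true}, {k // g k = m}) := by
        symm
        refine card_bij (fun f _ => sOf f) (fun f _ => ?_) (fun f _ f' _ h => ?_) ?_
        · refine mem_filter.2 ⟨mem_univ _, fun k hk l hl hkl => ?_, funext fun m => ?_⟩
          · obtain ⟨m, rfl⟩ := sOf_eq_true.1 hk
            obtain ⟨m', rfl⟩ := sOf_eq_true.1 hl
            rw [eq_of_g_eq hkl]
          · refine Bool.eq_iff_iff.2 ⟨fun h => ?_, fun h => ?_⟩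
            · obtain ⟨k, hk, rfl⟩ := boolImage_eq_true.1 h
              obtain ⟨m', rfl⟩ := sOf_eq_true.1 hk
              rw [(f m').2]
              exact m'.2
            · exact boolImage_eq_true.2 ⟨f ⟨m, h⟩, sOf_eq_true.2 ⟨_, rfl⟩, (f _).2⟩
        · funext m
          obtain ⟨m', hm'⟩ := sOf_eq_true.1 (show sOf f' (f m) = true from
            h ▸ sOf_eq_true.2 ⟨m, rfl⟩)
          obtain rfl := eq_of_g_eq (congrArg g hm')
          exact Subtype.ext hm'.symm
        · intro s hs
          obtain ⟨hinj, himage⟩ := (mem_filter.1 hs).2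
          choose k hk using fun m : {m // ε m = true} =>
            boolImage_eq_true.1 (himage ▸ m.2 : boolImage g s m = true)
          refine ⟨fun m => ⟨k m, (hk m).2⟩, mem_univ _, funext fun l => ?_⟩
          refine Bool.eq_iff_iff.2 ⟨fun h => ?_, fun h => ?_⟩
          · obtain ⟨m, rfl⟩ := sOf_eq_true.1 h
            exact (hk m).1
          · have hl : ε (g l) = true := himage ▸ boolImage_eq_true.2 ⟨l, h, rfl⟩
            exact sOf_eq_true.2 ⟨⟨g l, hl⟩, hinj (hk _).1 h (hk _).2⟩
    _ = ∏ m ∈ {m | ε m = true}, #{k | g k = m} := by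
        rw [Fintype.card_pi, ← prod_subtype_eq_prod_filter]
        simp only [Fintype.card_subtype, subtype_univ]

open scoped Classical in
theorem card_alternating_comp_eq_sum [LinearOrder α] [Fintype α] [PartialOrder β] [Fintype β]
    [DecidableEq β]
    {g : α → β} (hg : Monotone g) (c : β → γ) :
    #{s : α → Bool | s ≠ (fun _ => false) ∧ Alternating (c ∘ g) s} =
      ∑ ε : β → Bool, if ε ≠ (fun _ => false) ∧ Alternating c ε
        then ∏ m ∈ {m | ε m = true}, #{k | g k = m} else 0 := by
  rw [card_eq_sum_card_fiberwise (f := boolImage g) (t := univ) (fun _ _ => mem_univ _)]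
  refine sum_congr rfl fun ε _ => ?_
  split_ifs with hε
  · rw [← card_injOn_boolImage_eq g ε, filter_filter]
    congr 1
    ext s
    simp only [mem_filter, mem_univ, true_and]
    refine ⟨fun ⟨⟨_, hs⟩, himage⟩ => ⟨hs.injOn_of_monotone hg, himage⟩,
      fun ⟨hinj, himage⟩ => ⟨⟨?_, ?_⟩, himage⟩⟩
    · rw [ne_eq, ← boolImage_eq_false_iff, himage]
      exact hε.1
    · rw [alternating_comp_iff hg hinj, himage]
      exact hε.2
  · refine card_eq_zero.2 (filter_eq_empty_iff.2 fun s hs himage => hε ?_)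
    obtain ⟨hne, hs⟩ := (mem_filter.1 hs).2
    rw [← himage, ← alternating_comp_iff hg (hs.injOn_of_monotone hg), ne_eq,
      boolImage_eq_false_iff]
    exact ⟨hne, hs⟩

end Counting

section SignVectors

variable {K : ℕ}

theorem toPM_injective : Function.Injective (toPM (K := K)) := fun a b h => funext fun k => by
  have := congrFun h k
  revert this; simp only [toPM]; cases a k <;> cases b k <;> decide

theorem altSigns_toPM_iff (a b : Fin K → Bool) :
    AltSigns (toPM a) (toPM b) ↔ Alternating a (fun k => b k != a k) := by
  have hchanged (k) : toPM a k = toPM b k ↔ (b k != a k) = false := by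
    simp only [toPM]; cases a k <;> cases b k <;> decide
  have hsign (i j) (hi : (b i != a i) = true) (hj : (b j != a j) = true) :
      toPM b i - toPM a i = -(toPM b j - toPM a j) ↔ a i ≠ a j := by
    revert hi hj; simp only [toPM]; cases a i <;> cases b i <;> cases a j <;> cases b j <;> decide
  simp only [AltSigns, Alternating, Consecutive, and_imp, ne_eq, hchanged, Bool.not_eq_false]
  exact forall₂_congr fun i j => forall_congr' fun _ => forall₂_congr fun hi hj =>
    imp_congr_right fun _ => hsign i j hi hj

open scoped Classical in
theorem card_altSigns_toPM (a : Fin K → Bool) :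
    Nat.card {b // toPM b ≠ toPM a ∧ AltSigns (toPM a) (toPM b)} =
      #{s | s ≠ (fun _ => false) ∧ Alternating a s} := by
  let flip : (Fin K → Bool) ≃ (Fin K → Bool) :=
    ⟨fun b k => b k != a k, fun b k => b k != a k, fun b => by simp, fun b => by simp⟩
  rw [← Fintype.card_subtype, Nat.card_eq_fintype_card]
  refine Fintype.card_congr (flip.subtypeEquiv fun b => ?_)
  rw [altSigns_toPM_iff, toPM_injective.ne_iff]
  simp [flip, funext_iff]

end SignVectors

section Blocks

variable {M : ℕ → ℕ} {N K : ℕ}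

theorem ssum_mono (M : ℕ → ℕ) : Monotone (Ssum M) := fun _ _ h =>
  sum_le_sum_of_subset (range_subset_range.2 h)

theorem blk_mono (M : ℕ → ℕ) (N : ℕ) : Monotone (blk M N) := fun _ _ h =>
  card_le_card fun _ hm => by
    simp only [mem_filter] at hm ⊢
    exact ⟨hm.1, hm.2.trans h⟩

theorem le_blk_iff {j k : ℕ} (hj : j ≤ N) : j ≤ blk M N k ↔ Ssum M j ≤ k := by
  constructor
  · intro h
    by_contra hk
    have hsub : (range N).filter (fun m => Ssum M (m + 1) ≤ k) ⊆ range (j - 1) := fun m hm => by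
      have := (mem_filter.1 hm).2
      have : m + 1 < j := not_le.1 fun h => hk (((ssum_mono M) h).trans this)
      exact mem_range.2 (by omega)
    have := (card_le_card hsub).trans' h
    simp only [card_range] at this
    obtain rfl : j = 0 := by omega
    exact hk (Nat.zero_le _)
  · intro h
    refine (card_le_card fun m hm => ?_).trans' (card_range j).ge
    have hm := mem_range.1 hm
    exact mem_filter.2 ⟨mem_range.2 (by omega), (ssum_mono M hm).trans h⟩

theorem blk_lt {k : ℕ} (hk : k < Ssum M N) : blk M N k < N :=
  not_le.1 fun h => (not_le.2 hk) ((le_blk_iff le_rfl).1 h)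

theorem blk_eq_iff {j k : ℕ} (hj : j < N) :
    blk M N k = j ↔ Ssum M j ≤ k ∧ k < Ssum M (j + 1) := by
  rw [← le_blk_iff hj.le, ← not_le, ← le_blk_iff hj]
  omega

def blockIndex (hK : Ssum M N = K) (k : Fin K) : Fin N :=
  ⟨blk M N k, blk_lt (hK ▸ k.2)⟩

theorem monotone_blockIndex (hK : Ssum M N = K) : Monotone (blockIndex hK) := fun _ _ h =>
  blk_mono M N h

theorem card_filter_blockIndex_eq (hK : Ssum M N = K) (m : Fin N) :
    #{k | blockIndex hK k = m} = M m := by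
  have hlt : ∀ n ∈ Ico (Ssum M m) (Ssum M (m + 1)), n < K := fun n hn =>
    (mem_Ico.1 hn).2.trans_le (hK ▸ ssum_mono M m.2)
  have : ({k | blockIndex hK k = m} : Finset (Fin K)) =
      (Ico (Ssum M m) (Ssum M (m + 1))).attachFin hlt := by
    ext k
    simp [blockIndex, Fin.ext_iff, blk_eq_iff m.2]
  rw [this, card_attachFin, Nat.card_Ico, Ssum, Ssum, sum_range_succ, Nat.add_sub_cancel_left]

theorem avert_eq_toPM (hK : Ssum M N = K) :
    avert M N = toPM ((fun m : Fin N => decide ((m : ℕ) % 2 = 0)) ∘ blockIndex hK) := by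
  funext k
  by_cases h : blk M N k % 2 = 0 <;> simp [avert, toPM, blockIndex, h]

end Blocks

theorem alternating_parity_iff {N : ℕ} (ε : Fin N → Bool) :
    Alternating (fun m : Fin N => decide ((m : ℕ) % 2 = 0)) ε ↔
      ∀ m m' : Fin N, m < m' → ε m = true → ε m' = true →
        (∀ i : Fin N, m < i → i < m' → ε i = false) → Odd ((m' : ℕ) - (m : ℕ)) := by
  simp only [Alternating, Consecutive, and_imp]
  refine forall₂_congr fun m m' => forall_congr' fun hlt => ?_
  have : decide ((m : ℕ) % 2 = 0) ≠ decide ((m' : ℕ) % 2 = 0) ↔ Odd ((m' : ℕ) - m) := by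
    rw [Fin.lt_def] at hlt
    rw [Nat.odd_iff, ne_eq, decide_eq_decide]
    omega
  simp only [this]

open scoped Classical in
theorem stmt1_general (K N : ℕ) (M : ℕ → ℕ)
    (hK : ∑ m ∈ Finset.range N, M m = K) :
    Nat.card {b : Fin K → Bool //
        toPM b ≠ avert M N ∧ AltSigns (avert M N) (toPM b)} =
      ∑ ε : Fin N → Bool,
        if (ε ≠ fun _ => false) ∧
            (∀ m m' : Fin N, m < m' → ε m = true → ε m' = true →
              (∀ i : Fin N, m < i → i < m' → ε i = false) →
              Odd ((m' : ℕ) - (m : ℕ)))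
        then ∏ m ∈ Finset.univ.filter (fun m : Fin N => ε m = true), M (m : ℕ)
        else 0 := by
  have hK : Ssum M N = K := hK
  rw [avert_eq_toPM hK, card_altSigns_toPM, card_alternating_comp_eq_sum (monotone_blockIndex hK)]
  refine sum_congr rfl fun ε _ => ?_
  simp only [alternating_parity_iff, card_filter_blockIndex_eq]

open scoped Classical in
/-- The number of neighbors `b ≠ a` of a vertex `a` with constancy blocks of lengths
`M_0, …, M_{N-1}` equals the sum, over nonzero patterns `ε ∈ {0,1}^N` in which two
`1`s with only `0`s strictly between them must have odd index gap, of `∏_{m : ε_m = 1} M_m`. -/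
theorem stmt1 (K N : ℕ) (M : ℕ → ℕ) (hN : 0 < N) (hM : ∀ m < N, 0 < M m)
    (hK : ∑ m ∈ Finset.range N, M m = K) :
    Nat.card {b : Fin K → Bool //
        toPM b ≠ avert M N ∧ AltSigns (avert M N) (toPM b)} =
      ∑ ε : Fin N → Bool,
        if (ε ≠ fun _ => false) ∧
            (∀ m m' : Fin N, m < m' → ε m = true → ε m' = true →
              (∀ i : Fin N, m < i → i < m' → ε i = false) →
              Odd ((m' : ℕ) - (m : ℕ)))
        then ∏ m ∈ Finset.univ.filter (fun m : Fin N => ε m = true), M (m : ℕ)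
        else 0 :=
  stmt1_general K N M hK
end
end

section
/- Let ε be uniform on {-1,1}, (α_k)_{k≥1} i.i.d. Bernoulli(1/3), (β_k)_{k≥1} i.i.d. uniform on {-1,1}, all mutually independent. Define γ_1 = ε, γ_k = ε·(-1)^{α_1+...+α_{k-1}} for k ≥ 2, and A_k = (1-α_k)β_k + α_k γ_k, B_k = (1-α_k)β_k - α_k γ_k. Then for every K ≥ 1 and every pair (u,v) of distinct vertices of {-1,1}^K forming an edge of G_K, P((A_1,...,A_K) = u and (B_1,...,B_K) = v) = 1/(2·3^K). -/
open MeasureTheory ProbabilityTheory Finset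

noncomputable section

/- ----------------- auxiliary lemmas ----------------- -/

lemma sgn_inj : ∀ a b : Bool, sgn a = sgn b → a = b := by
  intro a b; cases a <;> cases b <;> simp [sgn]

/-- Alternation propagates: every changed coordinate has value
`u i₁ · (-1)^(number of changed coordinates before it)`. -/
lemma alt_main {K : ℕ} (u v : Fin K → ℤ) (hu : ∀ i, u i = 1 ∨ u i = -1)
    (hv : ∀ i, v i = 1 ∨ v i = -1) (halt : AltSigns u v)
    (T : Finset (Fin K)) (hTdef : T = Finset.univ.filter fun k => u k ≠ v k)
    (hT : T.Nonempty) :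
    ∀ k ∈ T, u k = u (T.min' hT) * (-1) ^ (T.filter fun l : Fin K => (l : ℕ) < (k : ℕ)).card := by
  have hmemT : ∀ k, k ∈ T ↔ u k ≠ v k := by subst hTdef; intro k; simp
  have hneg : ∀ k, u k ≠ v k → v k = -u k := by
    intro k h; rcases hu k with h1 | h1 <;> rcases hv k with h2 | h2 <;> omega
  suffices H : ∀ n : ℕ, ∀ k ∈ T, (k : ℕ) ≤ n →
      u k = u (T.min' hT) * (-1) ^ (T.filter fun l : Fin K => (l : ℕ) < (k : ℕ)).card by
    intro k hk; exact H k k hk le_rfl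
  intro n
  induction n using Nat.strong_induction_on with
  | _ n IH =>
    intro k hk hkn
    by_cases hemp : (T.filter fun l : Fin K => (l : ℕ) < (k : ℕ)) = ∅
    · have hik : T.min' hT = k := by
        have h1 := T.min'_le k hk
        rcases eq_or_lt_of_le h1 with h | h
        · exact h
        · exfalso
          have hmm : T.min' hT ∈ T.filter fun l : Fin K => (l : ℕ) < (k : ℕ) :=
            Finset.mem_filter.2 ⟨T.min'_mem hT, h⟩
          rw [hemp] at hmm
          exact absurd hmm (Finset.notMem_empty _)
      rw [hik, hemp]; simp
    · have hne : (T.filter fun l : Fin K => (l : ℕ) < (k : ℕ)).Nonempty :=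
        Finset.nonempty_iff_ne_empty.2 hemp
      set F := T.filter fun l : Fin K => (l : ℕ) < (k : ℕ) with hF
      set j := F.max' hne with hj
      have hjmem : j ∈ F := F.max'_mem hne
      rw [hF, Finset.mem_filter] at hjmem
      obtain ⟨hjT, hjk⟩ := hjmem
      have hjkF : j < k := hjk
      have hgap : ∀ l : Fin K, j < l → l < k → u l = v l := by
        intro l hjl hlk
        by_contra hne'
        have hlF : l ∈ F := by
          rw [hF, Finset.mem_filter]
          exact ⟨(hmemT l).2 hne', hlk⟩
        exact absurd (F.le_max' l hlF) (not_le.2 hjl)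
      have halt' := halt j k hjkF ((hmemT j).1 hjT) ((hmemT k).1 hk) hgap
      have hvj := hneg j ((hmemT j).1 hjT)
      have hvk := hneg k ((hmemT k).1 hk)
      have huk : u k = -u j := by omega
      have hcard : F.card = (T.filter fun l : Fin K => (l : ℕ) < (j : ℕ)).card + 1 := by
        have hset : F = insert j (T.filter fun l : Fin K => (l : ℕ) < (j : ℕ)) := by
          ext l
          rw [hF]
          simp only [Finset.mem_filter, Finset.mem_insert]
          constructor
          · rintro ⟨hlT, hlk⟩
            rcases lt_trichotomy l j with h | h | h
            · exact Or.inr ⟨hlT, h⟩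
            · exact Or.inl h
            · exact absurd (hgap l h hlk) ((hmemT l).1 hlT)
          · rintro (h | ⟨hlT, hlj⟩)
            · subst h; exact ⟨hjT, hjk⟩
            · exact ⟨hlT, lt_trans hlj hjk⟩
        rw [hset, Finset.card_insert_of_notMem (by simp)]
      have hjn : (j : ℕ) < n := lt_of_lt_of_le hjk hkn
      have hIH := IH (j : ℕ) hjn j hjT le_rfl
      rw [huk, hIH, hcard]
      ring
  
/-- Computation of `γ` when the pattern of `α`s matches the changed coordinates. -/
lemma gamma_eq {K : ℕ} (u v : Fin K → ℤ) (T : Finset (Fin K))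
    (hTdef : T = Finset.univ.filter fun k => u k ≠ v k) (ω : Omega K)
    (hα : ∀ k : Fin K, ω.2.1 k = 0 ↔ u k ≠ v k) (j : ℕ) :
    gammaRV j ω = sgn ω.1 * (-1) ^ (T.filter fun k : Fin K => (k : ℕ) < j).card := by
  subst hTdef
  unfold gammaRV epsRV
  have hexp : ∑ k ∈ Finset.univ.filter (fun k : Fin K => (k : ℕ) < j), alphaN k ω
      = ((Finset.univ.filter fun k : Fin K => u k ≠ v k).filter fun k : Fin K => (k : ℕ) < j).card := by
    rw [Finset.filter_filter, Finset.card_filter, Finset.sum_filter]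
    refine Finset.sum_congr rfl fun k _ => ?_
    unfold alphaN
    have hk := hα k
    by_cases h2 : u k = v k
    · have h3 : ¬ (ω.2.1 k = 0) := fun h => (hk.1 h) h2
      by_cases h1 : (k : ℕ) < j <;> simp [h1, h2, h3]
    · have h3 : ω.2.1 k = 0 := hk.2 h2
      by_cases h1 : (k : ℕ) < j <;> simp [h1, h2, h3]
  rw [hexp]

/-- For every edge `(u,v)` of `G_K` with `u ≠ v`,
`P((A_1,…,A_K) = u, (B_1,…,B_K) = v) = 1/(2·3^K)`. -/
theorem stmt2 (K : ℕ) (hK : 1 ≤ K) (u v : Fin K → ℤ)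
    (hu : ∀ i, u i = 1 ∨ u i = -1) (hv : ∀ i, v i = 1 ∨ v i = -1)
    (huv : u ≠ v) (halt : AltSigns u v) :
    unif K {ω | (fun k => ARV k ω) = u ∧ (fun k => BRV k ω) = v} =
      1 / (2 * 3 ^ K) := by
  set T : Finset (Fin K) := Finset.univ.filter (fun k => u k ≠ v k) with hTdef
  have hmemT : ∀ k, k ∈ T ↔ u k ≠ v k := by intro k; simp [hTdef]
  have hT : T.Nonempty := by
    rcases Function.ne_iff.mp huv with ⟨k, hk⟩
    exact ⟨k, (hmemT k).2 hk⟩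
  set i1 := T.min' hT with hi1
  have hi1T : i1 ∈ T := T.min'_mem hT
  have hi1c : u i1 ≠ v i1 := (hmemT i1).1 hi1T
  have hneg : ∀ k, u k ≠ v k → v k = -u k := by
    intro k h; rcases hu k with h1 | h1 <;> rcases hv k with h2 | h2 <;> omega
  set e0 : Bool := decide (u i1 = 1) with he0
  have hsgn_e0 : sgn e0 = u i1 := by
    rcases hu i1 with h | h <;> simp [he0, h, sgn]
  have hemp1 : (T.filter fun k : Fin K => (k : ℕ) < (i1 : ℕ)) = ∅ := by
    rw [Finset.filter_eq_empty_iff]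
    intro l hl
    exact not_lt.2 (T.min'_le l hl)
  set C : Omega K → Prop := fun ω =>
    ω.1 = e0 ∧ (∀ k, if u k = v k then ω.2.1 k ≠ 0 else ω.2.1 k = 0) ∧
      (∀ k, if u k = v k then ω.2.2 k = decide (u k = 1) else True) with hC
  have hgval : ∀ ω : Omega K, (∀ k : Fin K, ω.2.1 k = 0 ↔ u k ≠ v k) →
      ∀ k ∈ T, gammaRV (k : ℕ) ω = sgn ω.1 * (-1) ^ (T.filter fun l : Fin K => (l : ℕ) < (k : ℕ)).card :=
    fun ω hα k _ => gamma_eq u v T hTdef ω hα (k : ℕ)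
  -- characterization of the event
  have hchar : ∀ ω : Omega K,
      ((fun k => ARV k ω) = u ∧ (fun k => BRV k ω) = v) ↔ C ω := by
    intro ω
    constructor
    · rintro ⟨hA, hB⟩
      have hA' : ∀ k, ARV k ω = u k := fun k => congrFun hA k
      have hB' : ∀ k, BRV k ω = v k := fun k => congrFun hB k
      have hα : ∀ k : Fin K, ω.2.1 k = 0 ↔ u k ≠ v k := by
        intro k
        constructor
        · intro h0 heq
          have hAk : ARV k ω = gammaRV (k : ℕ) ω := by
            unfold ARV alphaRV; rw [if_pos h0]; ring
          have hBk : BRV k ω = -gammaRV (k : ℕ) ω := by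
            unfold BRV alphaRV; rw [if_pos h0]; ring
          have h1 : u k = gammaRV (k : ℕ) ω := (hA' k).symm.trans hAk
          have h2 : v k = -gammaRV (k : ℕ) ω := (hB' k).symm.trans hBk
          rcases hu k with h | h <;> omega
        · intro hne
          by_contra h0
          have hAk : ARV k ω = betaRV k ω := by
            unfold ARV alphaRV; rw [if_neg h0]; ring
          have hBk : BRV k ω = betaRV k ω := by
            unfold BRV alphaRV; rw [if_neg h0]; ring
          exact hne (by rw [← hA' k, ← hB' k, hAk, hBk])
      have h0i1 : ω.2.1 i1 = 0 := (hα i1).2 hi1c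
      have hAi1 : ARV i1 ω = gammaRV (i1 : ℕ) ω := by
        unfold ARV alphaRV; rw [if_pos h0i1]; ring
      have hgi1 := hgval ω hα i1 hi1T
      rw [hemp1] at hgi1
      simp only [Finset.card_empty, pow_zero, mul_one] at hgi1
      have hsgnω : sgn ω.1 = u i1 := by
        rw [← hgi1, ← hAi1, hA' i1]
      refine ⟨sgn_inj _ _ (hsgnω.trans hsgn_e0.symm), ?_, ?_⟩
      · intro k
        by_cases h : u k = v k
        · rw [if_pos h]
          intro h0
          exact (hα k).1 h0 h
        · rw [if_neg h]
          exact (hα k).2 h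
      · intro k
        by_cases h : u k = v k
        · rw [if_pos h]
          have h0 : ¬ (ω.2.1 k = 0) := fun hh => (hα k).1 hh h
          have hAk : ARV k ω = betaRV k ω := by
            unfold ARV alphaRV; rw [if_neg h0]; ring
          have hbk : sgn (ω.2.2 k) = u k := by
            have := (hA' k).symm.trans hAk
            unfold betaRV at this
            exact this.symm
          cases hb : ω.2.2 k
          · rw [hb] at hbk
            have huk : u k = -1 := by simpa [sgn] using hbk.symm
            rw [huk]; rfl
          · rw [hb] at hbk
            have huk : u k = 1 := by simpa [sgn] using hbk.symm
            rw [huk]; rfl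
        · rw [if_neg h]; trivial
    · intro hCω
      obtain ⟨hb, h1, h2⟩ := hCω
      have hα : ∀ k : Fin K, ω.2.1 k = 0 ↔ u k ≠ v k := by
        intro k
        have := h1 k
        by_cases h : u k = v k
        · rw [if_pos h] at this; simp [this, h]
        · rw [if_neg h] at this; simp [this, h]
      have hsgnω : sgn ω.1 = u i1 := by rw [hb, hsgn_e0]
      have hAB : ∀ k, ARV k ω = u k ∧ BRV k ω = v k := by
        intro k
        by_cases h : u k = v k
        · have h0 : ¬ (ω.2.1 k = 0) := fun hh => (hα k).1 hh h
          have hβ : ω.2.2 k = decide (u k = 1) := by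
            have := h2 k; rwa [if_pos h] at this
          have hbeta : betaRV k ω = u k := by
            unfold betaRV
            rcases hu k with h1' | h1' <;> simp [hβ, h1', sgn]
          constructor
          · unfold ARV alphaRV; rw [if_neg h0]; rw [hbeta]; ring_nf
          · unfold BRV alphaRV; rw [if_neg h0]; rw [hbeta, ← h]; ring_nf
        · have hkT : k ∈ T := (hmemT k).2 h
          have h0 : ω.2.1 k = 0 := (hα k).2 h
          have hg := hgval ω hα k hkT
          have hualt := alt_main u v hu hv halt T hTdef hT k hkT
          have hgu : gammaRV (k : ℕ) ω = u k := by
            rw [hg, hsgnω]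
            exact hualt.symm
          constructor
          · unfold ARV alphaRV; rw [if_pos h0, hgu]; ring
          · unfold BRV alphaRV; rw [if_pos h0, hgu, hneg k h]; ring
      constructor
      · funext k; exact (hAB k).1
      · funext k; exact (hAB k).2
  -- counting
  set φ : (Fin K → Bool) → Omega K := fun g =>
    (e0, fun k => if u k = v k then (if g k then 1 else 2) else 0,
      fun k => if u k = v k then decide (u k = 1) else g k) with hφ
  have hinj : Function.Injective φ := by
    intro g g' hgg
    have hb2 : ∀ k, (φ g).2.1 k = (φ g').2.1 k := fun k => congrFun (congrArg (fun ω : Omega K => ω.2.1) hgg) k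
    have hb3 : ∀ k, (φ g).2.2 k = (φ g').2.2 k := fun k => congrFun (congrArg (fun ω : Omega K => ω.2.2) hgg) k
    funext k
    by_cases h : u k = v k
    · have := hb2 k
      simp only [hφ, if_pos h] at this
      cases hgk : g k <;> cases hgk' : g' k <;> simp_all
    · have := hb3 k
      simp only [hφ, if_neg h] at this
      exact this
  have himg : Finset.univ.filter C = Finset.image φ Finset.univ := by
    ext ω
    simp only [Finset.mem_filter, Finset.mem_univ, true_and, Finset.mem_image]
    constructor
    · intro hCω
      obtain ⟨hb, h1, h2⟩ := hCω
      refine ⟨fun k => if u k = v k then decide (ω.2.1 k = 1) else ω.2.2 k, ?_⟩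
      rw [hφ]
      refine Prod.ext hb.symm (Prod.ext ?_ ?_)
      · funext k
        by_cases h : u k = v k
        · have hne0 : ω.2.1 k ≠ 0 := by have := h1 k; rwa [if_pos h] at this
          simp only [if_pos h]
          revert hne0
          generalize ω.2.1 k = x
          fin_cases x <;> simp
        · have h0 : ω.2.1 k = 0 := by have := h1 k; rwa [if_neg h] at this
          simp [h, h0]
      · funext k
        by_cases h : u k = v k
        · have := h2 k; rw [if_pos h] at this
          simp [h, this]
        · simp [h]
    · rintro ⟨g, rfl⟩
      refine ⟨rfl, ?_, ?_⟩
      · intro k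
        by_cases h : u k = v k
        · rw [if_pos h]
          simp only [hφ, if_pos h]
          cases g k <;> simp
        · rw [if_neg h]
          simp [hφ, h]
      · intro k
        by_cases h : u k = v k
        · rw [if_pos h]
          simp [hφ, h]
        · rw [if_neg h]; trivial
  have hcard : (Finset.univ.filter C).card = 2 ^ K := by
    rw [himg, Finset.card_image_of_injective _ hinj, Finset.card_univ]
    simp
  -- measure computation
  have hseteq : {ω : Omega K | (fun k => ARV k ω) = u ∧ (fun k => BRV k ω) = v}
      = {ω | C ω} := Set.ext hchar
  have hΩ : Fintype.card (Omega K) = 2 * 3 ^ K * 2 ^ K := by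
    simp [mul_assoc]
  rw [show unif K = (PMF.uniformOfFintype (Omega K)).toMeasure from rfl, hseteq,
    PMF.toMeasure_apply_fintype]
  have hptwise : ∀ ω : Omega K,
      ({ω | C ω} : Set (Omega K)).indicator (⇑(PMF.uniformOfFintype (Omega K))) ω
        = if C ω then ((Fintype.card (Omega K) : ENNReal))⁻¹ else 0 := by
    intro ω
    simp only [Set.indicator_apply, Set.mem_setOf_eq]
    by_cases h : C ω
    · rw [if_pos h, if_pos h, PMF.uniformOfFintype_apply]
    · rw [if_neg h, if_neg h]
  rw [Finset.sum_congr rfl fun ω _ => hptwise ω, Finset.sum_ite, Finset.sum_const,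
    Finset.sum_const_zero, add_zero, nsmul_eq_mul, hcard, hΩ]
  -- arithmetic in ENNReal
  have h2K0 : ((2 : ENNReal)) ^ K ≠ 0 := pow_ne_zero _ (by norm_num)
  have h2Ktop : ((2 : ENNReal)) ^ K ≠ ⊤ := ENNReal.pow_ne_top (by norm_num)
  push_cast
  rw [show ((2 : ENNReal) * 3 ^ K * 2 ^ K) = (2 * 3 ^ K) * 2 ^ K by ring]
  rw [ENNReal.mul_inv (Or.inr h2Ktop) (Or.inr h2K0)]
  rw [show ((2:ENNReal)^K * ((2 * 3 ^ K)⁻¹ * ((2:ENNReal)^K)⁻¹))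
      = (2 * 3 ^ K)⁻¹ * ((2:ENNReal)^K * ((2:ENNReal)^K)⁻¹) by ring]
  rw [ENNReal.mul_inv_cancel h2K0 h2Ktop, mul_one, one_div]
end
end

section
/- With ε, (α_k), (β_k), γ_k, A_k, B_k as in the coupled construction, for every K ≥ 1 and every u ∈ {-1,1}^K, P((A_1,...,A_K) = u and (B_1,...,B_K) = u) = 2/(2·3^K) = 1/3^K; i.e., both loop edges at u together receive probability 1/3^K. -/
open MeasureTheory ProbabilityTheory Finset

noncomputable section

open scoped ENNReal

lemma key {K : ℕ} (u : Fin K → ℤ) (hu : ∀ i, u i = 1 ∨ u i = -1) (ω : Omega K) :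
    ((fun k => ARV k ω) = u ∧ (fun k => BRV k ω) = u) ↔
      (∀ k, ω.2.1 k ≠ 0) ∧ ω.2.2 = fun k => decide (u k = 1) := by
  constructor
  · rintro ⟨hA, hB⟩
    have hA' := fun k => congrFun hA k
    have hB' := fun k => congrFun hB k
    have hα : ∀ k, ω.2.1 k ≠ 0 := by
      intro k h0
      have h1 := hA' k
      have h2 := hB' k
      simp only [ARV, BRV, alphaRV, if_pos h0] at h1 h2
      rcases hu k with h | h <;> omega
    refine ⟨hα, funext fun k => ?_⟩
    have h1 := hA' k
    simp only [ARV, alphaRV, if_neg (hα k), betaRV, sgn] at h1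
    rcases hu k with h | h <;> cases hb : ω.2.2 k <;> simp [hb] at h1 ⊢ <;> omega
  · rintro ⟨h1, h2⟩
    have h2' := fun k => congrFun h2 k
    constructor <;> funext k <;>
      simp only [ARV, BRV, alphaRV, if_neg (h1 k), betaRV, sgn, h2' k] <;>
      rcases hu k with h | h <;> simp [h]



/-- For every vertex `u` of `G_K`, `P((A_1,…,A_K) = u, (B_1,…,B_K) = u) = 1/3^K`:
both loop edges at `u` together receive probability `2/(2·3^K) = 1/3^K`. -/
theorem stmt3 (K : ℕ) (hK : 1 ≤ K) (u : Fin K → ℤ)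
    (hu : ∀ i, u i = 1 ∨ u i = -1) :
    unif K {ω | (fun k => ARV k ω) = u ∧ (fun k => BRV k ω) = u} =
      1 / 3 ^ K := by
  have hset : {ω : Omega K | (fun k => ARV k ω) = u ∧ (fun k => BRV k ω) = u} =
      {ω : Omega K | (∀ k, ω.2.1 k ≠ 0) ∧ ω.2.2 = fun k => decide (u k = 1)} := by
    ext ω; exact key u hu ω
  rw [hset]
  set S : Set (Omega K) := {ω : Omega K | (∀ k, ω.2.1 k ≠ 0) ∧ ω.2.2 = fun k => decide (u k = 1)}
  have hmeas : MeasurableSet S := (Set.toFinite S).measurableSet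
  rw [unif, PMF.toMeasure_uniformOfFintype_apply S hmeas]
  have hcardS : Nat.card S = 2 * 2 ^ K := by
    have e : S ≃ Bool × (Fin K → {x : Fin 3 // x ≠ 0}) :=
      { toFun := fun x => (x.1.1, fun k => ⟨x.1.2.1 k, x.2.1 k⟩)
        invFun := fun y => ⟨(y.1, fun k => (y.2 k).1, fun k => decide (u k = 1)),
          ⟨fun k => (y.2 k).2, rfl⟩⟩
        left_inv := fun x => by
          apply Subtype.ext
          obtain ⟨⟨a, b, c⟩, hb, hc⟩ := x
          simp [← hc]
        right_inv := fun y => rfl }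
    rw [Nat.card_congr e]
    have : Fintype.card {x : Fin 3 // x ≠ 0} = 2 := by decide
    simp [Nat.card_eq_fintype_card, this]
  rw [Fintype.card_eq_nat_card, hcardS]
  have hcardΩ : Fintype.card (Omega K) = 2 * (3 ^ K * 2 ^ K) := by
    simp [Fintype.card_prod, Fintype.card_fun]
  rw [hcardΩ]
  have h2 : ((2 : ℕ) : ℝ≥0∞) ≠ 0 := by norm_num
  push_cast
  have h3t : (3 : ℝ≥0∞) ^ K ≠ ⊤ := ENNReal.pow_ne_top (by norm_num)
  have h30 : (3 : ℝ≥0∞) ^ K ≠ 0 := pow_ne_zero _ (by norm_num)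
  have h2t : (2 : ℝ≥0∞) ^ K ≠ ⊤ := ENNReal.pow_ne_top (by norm_num)
  have h20 : (2 : ℝ≥0∞) ^ K ≠ 0 := pow_ne_zero _ (by norm_num)
  rw [ENNReal.div_eq_div_iff h30 h3t (mul_ne_zero (by norm_num) (mul_ne_zero h30 h20))
    (ENNReal.mul_ne_top (by norm_num) (ENNReal.mul_ne_top h3t h2t))]
  ring
end
end

section
/- In the coupled construction, for every 1 ≤ l ≤ m < n, the σ-algebra generated by (α_k, β_k) for l ≤ k ≤ m is independent of the σ-algebra generated by (α_k, β_k) for m+1 ≤ k ≤ n, conditionally on γ_{m+1}. -/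
open MeasureTheory ProbabilityTheory Finset

noncomputable section

instance (K : ℕ) : IsProbabilityMeasure (unif K) :=
  PMF.toMeasure.isProbabilityMeasure _


/-! Under the uniform measure the past `(ε, (α_k, β_k)_{k ≤ m})` is independent of the future
`(α_k, β_k)_{k > m}`, and both `γ_{m+1}` and the variables `(α_k, β_k)` with `k ≤ m` are
functions of the past. It then suffices that `Indep (m₁ ⊔ m') m₂ μ` implies
`CondIndep m' m₁ m₂ μ`: conditioning `1_{t₁} 1_{t₂}` on `m₁ ⊔ m'` pulls out `1_{t₁}` and replaces
`1_{t₂}` by the constant `μ t₂`, and a further conditioning on `m'` gives the product formula. -/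

section CondIndep

variable {Ω : Type*} {m' m₁ m₂ mΩ : MeasurableSpace Ω} {μ : Measure Ω} [IsProbabilityMeasure μ]

lemma condExp_indicator_ae_eq_of_indep (hm' : m' ≤ mΩ) (hm₂ : m₂ ≤ mΩ) (h : Indep m₂ m' μ)
    {t : Set Ω} (ht : MeasurableSet[m₂] t) :
    μ[t.indicator 1 | m'] =ᵐ[μ] fun _ => μ.real t := by
  have hsm : StronglyMeasurable[m₂] (t.indicator (1 : Ω → ℝ)) := stronglyMeasurable_one.indicator ht
  have := condExp_indep_eq hm₂ hm' hsm h
  rwa [integral_indicator_one (hm₂ t ht)] at this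

lemma condIndep_of_indep_sup [StandardBorelSpace Ω] (hm' : m' ≤ mΩ) (hm₁ : m₁ ≤ mΩ)
    (hm₂ : m₂ ≤ mΩ) (h : Indep (m₁ ⊔ m') m₂ μ) :
    CondIndep m' m₁ m₂ hm' μ := by
  rw [condIndep_iff m' m₁ m₂ hm' hm₁ hm₂ μ]
  intro t₁ t₂ ht₁ ht₂
  have hM : m₁ ⊔ m' ≤ mΩ := sup_le hm₁ hm'
  have hM₂ : μ[t₂.indicator 1 | m₁ ⊔ m'] =ᵐ[μ] fun _ => μ.real t₂ :=
    condExp_indicator_ae_eq_of_indep hM hm₂ h.symm ht₂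
  have hm'₂ : μ[t₂.indicator 1 | m'] =ᵐ[μ] fun _ => μ.real t₂ :=
    condExp_indicator_ae_eq_of_indep hm' hm₂ (indep_of_indep_of_le_right h.symm le_sup_right) ht₂
  have hint₂ : Integrable (t₂.indicator (1 : Ω → ℝ)) μ :=
    (integrable_const 1).indicator (hm₂ t₂ ht₂)
  have hint₁₂ : Integrable (t₁.indicator (1 : Ω → ℝ) * t₂.indicator 1) μ := by
    rw [← Set.inter_indicator_one]
    exact (integrable_const 1).indicator ((hm₁ t₁ ht₁).inter (hm₂ t₂ ht₂))
  have hpull : μ[t₁.indicator 1 * t₂.indicator 1 | m₁ ⊔ m'] =ᵐ[μ]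
      μ.real t₂ • t₁.indicator (1 : Ω → ℝ) := by
    have hsm₁ : StronglyMeasurable[m₁ ⊔ m'] (t₁.indicator (1 : Ω → ℝ)) :=
      stronglyMeasurable_one.indicator (le_sup_left (b := m') t₁ ht₁)
    filter_upwards [condExp_mul_of_stronglyMeasurable_left hsm₁ hint₁₂ hint₂, hM₂] with ω h₁ h₂
    rw [h₁, Pi.mul_apply, h₂, Pi.smul_apply, smul_eq_mul, mul_comm]
  calc μ[(t₁ ∩ t₂).indicator 1 | m']
      = μ[t₁.indicator 1 * t₂.indicator 1 | m'] := by rw [Set.inter_indicator_one]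
    _ =ᵐ[μ] μ[μ[t₁.indicator 1 * t₂.indicator 1 | m₁ ⊔ m'] | m'] :=
        (condExp_condExp_of_le le_sup_right hM).symm
    _ =ᵐ[μ] μ[μ.real t₂ • t₁.indicator 1 | m'] := condExp_congr_ae hpull
    _ =ᵐ[μ] μ.real t₂ • μ[t₁.indicator 1 | m'] := condExp_smul _ _ _
    _ =ᵐ[μ] μ[t₁.indicator 1 | m'] * μ[t₂.indicator 1 | m'] := by
        filter_upwards [hm'₂] with ω hω
        simp [hω, mul_comm]

end CondIndep

section Uniform

variable {Ω α β : Type*} [Fintype Ω] [Nonempty Ω] [Fintype α] [Nonempty α] [Fintype β]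
  [Nonempty β] [MeasurableSpace Ω] [MeasurableSingletonClass Ω] [MeasurableSpace α]
  [MeasurableSingletonClass α] [MeasurableSpace β] [MeasurableSingletonClass β]

lemma map_toMeasure_uniformOfFintype_of_equiv_prod (e : Ω ≃ α × β) :
    (PMF.uniformOfFintype Ω).toMeasure.map e =
      (PMF.uniformOfFintype α).toMeasure.prod (PMF.uniformOfFintype β).toMeasure := by
  refine Measure.ext_of_singleton fun z => ?_
  rw [Measure.map_apply (measurable_of_countable e) (measurableSet_singleton z),
    ← e.image_symm_eq_preimage, Set.image_singleton, ← Set.singleton_prod_singleton,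
    Measure.prod_prod]
  simp only [PMF.toMeasure_apply_singleton _ _ (measurableSet_singleton _),
    PMF.uniformOfFintype_apply, Fintype.card_congr e, Fintype.card_prod, Nat.cast_mul]
  exact ENNReal.mul_inv (.inl (by exact_mod_cast Fintype.card_ne_zero))
    (.inl (ENNReal.natCast_ne_top _))

lemma indepFun_toMeasure_uniformOfFintype_of_equiv_prod (e : Ω ≃ α × β) :
    IndepFun (Prod.fst ∘ e) (Prod.snd ∘ e) (PMF.uniformOfFintype Ω).toMeasure := by
  have he : Measurable e := measurable_of_countable e
  rw [indepFun_iff_map_prod_eq_prod_map_map (measurable_fst.comp he).aemeasurable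
    (measurable_snd.comp he).aemeasurable, ← Measure.map_map measurable_fst he, ← Measure.map_map measurable_snd he,
    map_toMeasure_uniformOfFintype_of_equiv_prod, Measure.map_fst_prod, Measure.map_snd_prod]
  simpa using map_toMeasure_uniformOfFintype_of_equiv_prod e

end Uniform

def pastFutureEquiv (K m : ℕ) : Omega K ≃
    (Bool × ({k : Fin K // (k : ℕ) < m} → Fin 3 × Bool)) ×
      ({k : Fin K // ¬(k : ℕ) < m} → Fin 3 × Bool) :=
  ((Equiv.refl Bool).prodCongr
    ((Equiv.arrowProdEquivProdArrow _ (fun _ => Fin 3) (fun _ => Bool)).symm.trans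
      (Equiv.piEquivPiSubtypeProd (fun k : Fin K => (k : ℕ) < m) _))).trans
    (Equiv.prodAssoc _ _ _).symm

lemma indepFun_past_future (K m : ℕ) :
    IndepFun (Prod.fst ∘ pastFutureEquiv K m) (Prod.snd ∘ pastFutureEquiv K m) (unif K) :=
  indepFun_toMeasure_uniformOfFintype_of_equiv_prod _

lemma comap_gammaRV_le_past (K m : ℕ) :
    MeasurableSpace.comap (gammaRV (K := K) m) inferInstance ≤
      MeasurableSpace.comap (Prod.fst ∘ pastFutureEquiv K m) inferInstance := by
  refine MeasurableSpace.comap_le_comap_of_eq_comp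
    (fun p => sgn p.1 * (-1) ^ ∑ j, if (p.2 j).1 = 0 then 1 else 0)
    (measurable_of_countable _) (funext fun ω => ?_)
  simp only [gammaRV, epsRV, Function.comp_apply]
  congr 2
  exact Finset.sum_subtype _ (by simp) (fun k => alphaN k ω)

lemma iSup_comap_coord_le_past (K m : ℕ) (p : Fin K → Prop) (hp : ∀ k, p k → (k : ℕ) < m) :
    ⨆ k : Fin K, ⨆ _ : p k,
        MeasurableSpace.comap (fun ω : Omega K => (ω.2.1 k, ω.2.2 k)) inferInstance ≤
      MeasurableSpace.comap (Prod.fst ∘ pastFutureEquiv K m) inferInstance :=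
  iSup₂_le fun k hk => MeasurableSpace.comap_le_comap_of_eq_comp
    (fun q => q.2 ⟨k, hp k hk⟩) (measurable_of_countable _) rfl

lemma iSup_comap_coord_le_future (K m : ℕ) (p : Fin K → Prop) (hp : ∀ k, p k → m ≤ (k : ℕ)) :
    ⨆ k : Fin K, ⨆ _ : p k,
        MeasurableSpace.comap (fun ω : Omega K => (ω.2.1 k, ω.2.2 k)) inferInstance ≤
      MeasurableSpace.comap (Prod.snd ∘ pastFutureEquiv K m) inferInstance :=
  iSup₂_le fun k hk => MeasurableSpace.comap_le_comap_of_eq_comp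
    (fun q => q ⟨k, (hp k hk).not_gt⟩) (measurable_of_countable _) rfl

-- The coordinate `k : Fin K` carries the paper's index `k + 1`.
theorem stmt11_general (K l m n : ℕ) :
    ProbabilityTheory.CondIndep
      (MeasurableSpace.comap (gammaRV (K := K) m) inferInstance)
      (⨆ k : Fin K, ⨆ _ : l ≤ (k : ℕ) + 1 ∧ (k : ℕ) + 1 ≤ m,
        MeasurableSpace.comap (fun ω : Omega K => (ω.2.1 k, ω.2.2 k)) inferInstance)
      (⨆ k : Fin K, ⨆ _ : m + 1 ≤ (k : ℕ) + 1 ∧ (k : ℕ) + 1 ≤ n,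
        MeasurableSpace.comap (fun ω : Omega K => (ω.2.1 k, ω.2.2 k)) inferInstance)
      (fun s _ => s.toFinite.measurableSet) (unif K) := by
  have hpast := iSup_comap_coord_le_past K m (fun k => l ≤ (k : ℕ) + 1 ∧ (k : ℕ) + 1 ≤ m)
    fun _ hk => hk.2
  have hfuture := iSup_comap_coord_le_future K m (fun k => m + 1 ≤ (k : ℕ) + 1 ∧ (k : ℕ) + 1 ≤ n)
    fun _ hk => Nat.le_of_succ_le_succ hk.1
  refine condIndep_of_indep_sup _ (fun s _ => s.toFinite.measurableSet)
    (fun s _ => s.toFinite.measurableSet) ?_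
  exact indep_of_indep_of_le (indepFun_past_future K m) (sup_le hpast (comap_gammaRV_le_past K m))
    hfuture

/-- Conditional independence: the σ-algebra generated by `(α_k, β_k)` for `l ≤ k ≤ m`
is independent of the σ-algebra generated by `(α_k, β_k)` for `m+1 ≤ k ≤ n`,
conditionally on `γ_{m+1}`. (Indices are 1-based as in the paper: the coordinate
`k : Fin K` carries the paper's index `k+1`, and `gammaRV m` is the paper's `γ_{m+1}`.) -/
theorem stmt11 (K l m n : ℕ) (hl : 1 ≤ l) (hlm : l ≤ m) (hmn : m < n) (hnK : n ≤ K) :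
    ProbabilityTheory.CondIndep
      (MeasurableSpace.comap (gammaRV (K := K) m) inferInstance)
      (⨆ k : Fin K, ⨆ _ : l ≤ (k : ℕ) + 1 ∧ (k : ℕ) + 1 ≤ m,
        MeasurableSpace.comap (fun ω : Omega K => (ω.2.1 k, ω.2.2 k)) inferInstance)
      (⨆ k : Fin K, ⨆ _ : m + 1 ≤ (k : ℕ) + 1 ∧ (k : ℕ) + 1 ≤ n,
        MeasurableSpace.comap (fun ω : Omega K => (ω.2.1 k, ω.2.2 k)) inferInstance)
      (fun s _ => s.toFinite.measurableSet) (unif K) :=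
  stmt11_general K l m n
end
end

section
/- With the coupled construction restricted to a single constancy block of length M (indices 1 to M) and target value i ∈ {-1,1}: P(γ_1 = i, A_k = i for all 1 ≤ k ≤ M, γ_{M+1} = i) = 1/(2·3^M), P(γ_1 = i, A_k = i for all k, γ_{M+1} = -i) = M/(2·3^M), and P(γ_1 = -i, A_k = i for all k, γ_{M+1} = i) = 0, hence P(γ_1 = -i, A_k = i for all k) = P(γ_1 = -i, A_k = i for all k, γ_{M+1} = -i) = 1/(2·3^M). -/
open MeasureTheory ProbabilityTheory Finset

noncomputable section

/-!
Call `k` a flip if `α_k = 1`. At the flip of rank `j` (the `j`-th flip, counted from `0`) one has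
`A_k = γ_k = ε (-1)^j`, and elsewhere `A_k = β_k`. Hence `A ≡ i` holds exactly when `β_k = i` off
the flips and either there is no flip, or `ε = i` and there is exactly one flip (flips of rank
`0` and `1` would give both values `±ε` to `A`). Prescribing `ε`, the set of flips, and `β = i`
off it leaves two of the six values of `(α_k, β_k)` at every `k`, so such an event has probability
`1/2 · 3^{-M}`. Finally `γ_{M+1} = ε (-1)^{#flips}`.
-/

theorem Finset.exists_mem_card_filter_lt_eq {α : Type*} [LinearOrder α] (s : Finset α) {j : ℕ}
    (hj : j < #s) : ∃ a ∈ s, #{b ∈ s | b < a} = j := by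
  have hmono : StrictMonoOn (fun a => #{b ∈ s | b < a}) s := fun a ha c _ hac =>
    card_lt_card <| (ssubset_iff_of_subset fun b hb => by grind).2 ⟨a, by grind, by simp⟩
  obtain ⟨a, ha, h⟩ := surjOn_of_injOn_of_card_le (fun a => #{b ∈ s | b < a})
    (fun a ha => mem_range.2 (card_lt_card (filter_ssubset.2 ⟨a, ha, lt_irrefl a⟩)))
    hmono.injOn (by simp) (mem_range.2 hj)
  exact ⟨a, ha, h⟩

def coordEquiv (K : ℕ) (Q : Bool → Prop) (P : Fin K → Fin 3 × Bool → Prop) :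
    {ω : Omega K // Q ω.1 ∧ ∀ k, P k (ω.2.1 k, ω.2.2 k)} ≃ {b // Q b} × ∀ k, {p // P k p} where
  toFun ω := (⟨ω.1.1, ω.2.1⟩, fun k => ⟨(ω.1.2.1 k, ω.1.2.2 k), ω.2.2 k⟩)
  invFun x := ⟨(x.1.1, fun k => (x.2 k).1.1, fun k => (x.2 k).1.2), x.1.2, fun k => (x.2 k).2⟩
  left_inv _ := rfl
  right_inv _ := rfl

lemma unif_coordwise {K : ℕ} (Q : Bool → Prop) (P : Fin K → Fin 3 × Bool → Prop)
    [DecidablePred Q] [∀ k, DecidablePred (P k)] :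
    unif K {ω | Q ω.1 ∧ ∀ k, P k (ω.2.1 k, ω.2.2 k)} =
      (Fintype.card {b // Q b} * ∏ k, Fintype.card {p // P k p} : ENNReal) /
        (2 * 3 ^ K * 2 ^ K) := by
  have hcard : Fintype.card {ω // ω ∈ {ω : Omega K | Q ω.1 ∧ ∀ k, P k (ω.2.1 k, ω.2.2 k)}} =
      Fintype.card ({b // Q b} × ∀ k, {p // P k p}) := Fintype.card_congr (coordEquiv K Q P)
  rw [unif, PMF.toMeasure_uniformOfFintype_apply _ (Set.toFinite _).measurableSet, hcard]
  simp [Fintype.card_prod, Fintype.card_pi, mul_assoc]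

lemma unif_coordwise_of_card_eq {K : ℕ} (Q : Bool → Prop) (P : Fin K → Fin 3 × Bool → Prop)
    [DecidablePred Q] [∀ k, DecidablePred (P k)] (hQ : Fintype.card {b // Q b} = 1)
    (hP : ∀ k, Fintype.card {p // P k p} = 2) :
    unif K {ω | Q ω.1 ∧ ∀ k, P k (ω.2.1 k, ω.2.2 k)} = 1 / (2 * 3 ^ K) := by
  rw [unif_coordwise, hQ, Finset.prod_congr rfl fun k _ => hP k]
  simpa using ENNReal.mul_div_mul_right 1 (2 * 3 ^ K) (pow_ne_zero K two_ne_zero)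
    (ENNReal.pow_ne_top ENNReal.ofNat_ne_top)

section

variable {M : ℕ}

/-- The positions `k` with `α_k = 1`. -/
def flips (ω : Omega M) : Finset (Fin M) := {k | ω.2.1 k = 0}

lemma gammaRV_eq (j : ℕ) (ω : Omega M) :
    gammaRV j ω = epsRV ω * (-1) ^ #{k ∈ flips ω | k.val < j} := by
  simp only [gammaRV, alphaN, sum_boole, flips, filter_filter]
  norm_cast
  simp only [and_comm]

lemma gammaRV_zero (ω : Omega M) : gammaRV 0 ω = epsRV ω := by
  simp [gammaRV_eq]

lemma gammaRV_self (ω : Omega M) : gammaRV M ω = epsRV ω * (-1) ^ #(flips ω) := by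
  simp [gammaRV_eq]

lemma ARV_of_mem_flips {k : Fin M} {ω : Omega M} (hk : k ∈ flips ω) :
    ARV k ω = epsRV ω * (-1) ^ #{b ∈ flips ω | b < k} := by
  simp_all [ARV, alphaRV, flips, gammaRV_eq, Fin.val_fin_lt]

lemma ARV_of_notMem_flips {k : Fin M} {ω : Omega M} (hk : k ∉ flips ω) :
    ARV k ω = betaRV k ω := by
  simp_all [ARV, alphaRV, flips]

variable {i : ℤ}

lemma forall_ARV_eq_iff (hi : i = 1 ∨ i = -1) (ω : Omega M) :
    (∀ k, ARV k ω = i) ↔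
      (∀ k ∉ flips ω, betaRV k ω = i) ∧
        (flips ω = ∅ ∨ epsRV ω = i ∧ ∃ k₀, flips ω = {k₀}) := by
  constructor
  · intro hA
    refine ⟨fun k hk => (ARV_of_notMem_flips hk).symm.trans (hA k), ?_⟩
    have hrank : ∀ j < #(flips ω), epsRV ω * (-1) ^ j = i := fun j hj => by
      obtain ⟨a, ha, rfl⟩ := (flips ω).exists_mem_card_filter_lt_eq hj
      rw [← ARV_of_mem_flips ha, hA]
    rcases Nat.lt_or_ge #(flips ω) 2 with h | h
    · interval_cases hcard : #(flips ω)
      · exact Or.inl (card_eq_zero.1 hcard)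
      · exact Or.inr ⟨by simpa using hrank 0 one_pos, card_eq_one.1 hcard⟩
    · have h0 := hrank 0 (by omega)
      have h1 := hrank 1 (by omega)
      simp only [pow_zero, mul_one, pow_one, mul_neg_one] at h0 h1
      omega
  · rintro ⟨hβ, hflips⟩ k
    by_cases hk : k ∈ flips ω
    · obtain ⟨hε, k₀, h⟩ := hflips.resolve_left (ne_empty_of_mem hk)
      rw [h, mem_singleton] at hk
      subst hk
      simp [ARV_of_mem_flips (h ▸ mem_singleton_self k), h, hε, filter_singleton]
    · rw [ARV_of_notMem_flips hk, hβ k hk]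

lemma flips_eq_and_iff (s : Finset (Fin M)) (ω : Omega M) :
    (flips ω = s ∧ ∀ k ∉ flips ω, betaRV k ω = i) ↔
      ∀ k, if k ∈ s then ω.2.1 k = 0 else ω.2.1 k ≠ 0 ∧ sgn (ω.2.2 k) = i := by
  simp only [Finset.ext_iff, flips, mem_filter, mem_univ, true_and, betaRV]
  grind

lemma unif_flips_eq {e : ℤ} (he : e = 1 ∨ e = -1) (hi : i = 1 ∨ i = -1) (s : Finset (Fin M)) :
    unif M {ω | epsRV ω = e ∧ flips ω = s ∧ ∀ k ∉ flips ω, betaRV k ω = i} = 1 / (2 * 3 ^ M) := by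
  simp only [flips_eq_and_iff, epsRV]
  apply unif_coordwise_of_card_eq (fun b => sgn b = e)
    (fun k p => if k ∈ s then p.1 = 0 else p.1 ≠ 0 ∧ sgn p.2 = i)
  · rcases he with rfl | rfl <;> rfl
  · intro k
    split_ifs
    · rfl
    · rcases hi with rfl | rfl <;> rfl

lemma unif_flips_eq_singleton {e : ℤ} (he : e = 1 ∨ e = -1) (hi : i = 1 ∨ i = -1) :
    unif M {ω | epsRV ω = e ∧ (∃ k₀, flips ω = {k₀}) ∧ ∀ k ∉ flips ω, betaRV k ω = i} =
      M / (2 * 3 ^ M) := by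
  have hunion :
      {ω : Omega M | epsRV ω = e ∧ (∃ k₀, flips ω = {k₀}) ∧ ∀ k ∉ flips ω, betaRV k ω = i} =
        ⋃ k₀, {ω | epsRV ω = e ∧ flips ω = {k₀} ∧ ∀ k ∉ flips ω, betaRV k ω = i} := by
    ext; simp
  rw [hunion, measure_iUnion, tsum_fintype]
  · simp [unif_flips_eq he hi, div_eq_mul_inv]
  · intro k₀ k₁ hne
    exact Set.disjoint_left.2 fun ω h₀ h₁ => hne (singleton_inj.1 (h₀.2.1.symm.trans h₁.2.1))
  · exact fun _ => (Set.toFinite _).measurableSet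

end

/-- Single constancy block of length `M`, target value `i ∈ {-1,1}`
(here `gammaRV 0 = γ_1` and `gammaRV M = γ_{M+1}`):
`P(γ_1 = i, A ≡ i, γ_{M+1} = i) = 1/(2·3^M)`,
`P(γ_1 = i, A ≡ i, γ_{M+1} = -i) = M/(2·3^M)`,
`P(γ_1 = -i, A ≡ i, γ_{M+1} = i) = 0`, hence
`P(γ_1 = -i, A ≡ i) = P(γ_1 = -i, A ≡ i, γ_{M+1} = -i) = 1/(2·3^M)`. -/
theorem stmt12 (M : ℕ) (i : ℤ) (hi : i = 1 ∨ i = -1) :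
    unif M {ω | gammaRV 0 ω = i ∧ (∀ k : Fin M, ARV k ω = i) ∧ gammaRV M ω = i} =
        1 / (2 * 3 ^ M) ∧
    unif M {ω | gammaRV 0 ω = i ∧ (∀ k : Fin M, ARV k ω = i) ∧ gammaRV M ω = -i} =
        (M : ENNReal) / (2 * 3 ^ M) ∧
    unif M {ω | gammaRV 0 ω = -i ∧ (∀ k : Fin M, ARV k ω = i) ∧ gammaRV M ω = i} = 0 ∧
    unif M {ω | gammaRV 0 ω = -i ∧ (∀ k : Fin M, ARV k ω = i)} =
      unif M {ω | gammaRV 0 ω = -i ∧ (∀ k : Fin M, ARV k ω = i) ∧ gammaRV M ω = -i} ∧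
    unif M {ω | gammaRV 0 ω = -i ∧ (∀ k : Fin M, ARV k ω = i)} = 1 / (2 * 3 ^ M) := by
  simp only [gammaRV_zero, gammaRV_self, forall_ARV_eq_iff hi]
  refine ⟨?_, ?_, ?_, ?_, ?_⟩
  · convert unif_flips_eq hi hi ∅ using 2
    ext
    grind
  · convert unif_flips_eq_singleton hi hi using 2
    ext
    grind
  · convert measure_empty (μ := unif M)
    ext
    grind
  · congr 1
    ext
    grind
  · convert unif_flips_eq (e := -i) (by omega) hi ∅ using 2
    ext
    grind
end
end
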